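/- arXiv:math/0205067 — 3 statements merged into one kernel-verified Lean document; each statement's English description precedes it below -/
import Mathlib

section
/- Let X be a topological space, let D₁ and D₂ be irreducible topological spaces, and let f : D₁ × D₂ → X be a map which is separately continuous, i.e., for every d₁ ∈ D₁ the map d₂ ↦ f(d₁, d₂) is continuous, and for every d₂ ∈ D₂ the map d₁ ↦ f(d₁, d₂) is continuous. Then the image of f, i.e., the set range(f) = { f(d₁, d₂) : d₁ ∈ D₁, d₂ ∈ D₂ } ⊆ X, is an irreducible subset of X. -/
/-!
If open sets `U` and `V` meet the image at `f (a, b)` and `f (a', b')`, irreducibility of the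
first factor gives `c` with `f (c, b) ∈ U` and `f (c, b') ∈ V`; irreducibility of the second
factor, applied along the slice through `c`, then gives `d` with `f (c, d) ∈ U ∩ V`.
-/

open Set

section

variable {α β γ : Type*} [TopologicalSpace α] [TopologicalSpace β] [TopologicalSpace γ]

theorem IsPreirreducible.inter_preimage_inter_nonempty {s : Set α} (hs : IsPreirreducible s)
    {g g' : α → β} (hg : ContinuousOn g s) (hg' : ContinuousOn g' s) {u v : Set β}
    (hu : IsOpen u) (hv : IsOpen v) (hsu : (s ∩ g ⁻¹' u).Nonempty)
    (hsv : (s ∩ g' ⁻¹' v).Nonempty) : (s ∩ (g ⁻¹' u ∩ g' ⁻¹' v)).Nonempty := by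
  obtain ⟨u', hu', hu'_eq⟩ := continuousOn_iff'.1 hg u hu
  obtain ⟨v', hv', hv'_eq⟩ := continuousOn_iff'.1 hg' v hv
  obtain ⟨x, hxs, hxu⟩ := hsu
  obtain ⟨y, hys, hyv⟩ := hsv
  obtain ⟨z, hzs, hzu', hzv'⟩ := hs u' v' hu' hv'
    ⟨x, hxs, (hu'_eq.subset ⟨hxu, hxs⟩).1⟩ ⟨y, hys, (hv'_eq.subset ⟨hyv, hys⟩).1⟩
  exact ⟨z, hzs, (hu'_eq.symm.subset ⟨hzu', hzs⟩).1, (hv'_eq.symm.subset ⟨hzv', hzs⟩).1⟩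

theorem IsPreirreducible.image2 {f : α → β → γ} {s : Set α} {t : Set β}
    (hs : IsPreirreducible s) (ht : IsPreirreducible t)
    (hf₁ : ∀ a ∈ s, ContinuousOn (f a) t) (hf₂ : ∀ b ∈ t, ContinuousOn (fun a => f a b) s) :
    IsPreirreducible (image2 f s t) := by
  rintro u v hu hv ⟨_, ⟨a, ha, b, hb, rfl⟩, hu_ab⟩ ⟨_, ⟨a', ha', b', hb', rfl⟩, hv_ab'⟩
  obtain ⟨c, hc, hcu, hcv⟩ := hs.inter_preimage_inter_nonempty (hf₂ b hb) (hf₂ b' hb') hu hv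
    ⟨a, ha, hu_ab⟩ ⟨a', ha', hv_ab'⟩
  obtain ⟨d, hd, hduv⟩ := ht.inter_preimage_inter_nonempty (hf₁ c hc) (hf₁ c hc) hu hv
    ⟨b, hb, hcu⟩ ⟨b', hb', hcv⟩
  exact ⟨f c d, mem_image2_of_mem hc hd, hduv⟩

theorem IsIrreducible.image2 {f : α → β → γ} {s : Set α} {t : Set β}
    (hs : IsIrreducible s) (ht : IsIrreducible t)
    (hf₁ : ∀ a ∈ s, ContinuousOn (f a) t) (hf₂ : ∀ b ∈ t, ContinuousOn (fun a => f a b) s) :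
    IsIrreducible (image2 f s t) :=
  ⟨hs.nonempty.image2 ht.nonempty, hs.isPreirreducible.image2 ht.isPreirreducible hf₁ hf₂⟩

end

/-- If `D₁` and `D₂` are irreducible topological spaces and `f : D₁ × D₂ → X` is
separately continuous, then the range of `f` is an irreducible subset of `X`. -/
theorem range_isIrreducible_of_separately_continuous
    {X D₁ D₂ : Type*} [TopologicalSpace X] [TopologicalSpace D₁] [TopologicalSpace D₂]
    [IrreducibleSpace D₁] [IrreducibleSpace D₂]
    (f : D₁ × D₂ → X)
    (h₁ : ∀ d₁ : D₁, Continuous fun d₂ : D₂ => f (d₁, d₂))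
    (h₂ : ∀ d₂ : D₂, Continuous fun d₁ : D₁ => f (d₁, d₂)) :
    IsIrreducible (Set.range f) := by
  have h := (IrreducibleSpace.isIrreducible_univ D₁).image2
    (IrreducibleSpace.isIrreducible_univ D₂) (f := fun a b => f (a, b))
    (fun a _ => (h₁ a).continuousOn) (fun b _ => (h₂ b).continuousOn)
  rwa [image2_curry, univ_prod_univ, image_univ] at h
end

section
/- Let F be a field, A a nonempty set, and R a subalgebra of the F-algebra of all functions A → F. Equip A with the Zariski topology of the function algebra R. Then A is an irreducible topological space if and only if R is an integral domain. -/
/-- The Zariski topology on a set `A` associated with a subalgebra `R` of the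
`F`-algebra of all functions `A → F`: it is generated by the basic open sets
`{a | f a ≠ 0}` for `f ∈ R`; equivalently, its closed sets are exactly the common
zero sets of subsets of `R`. -/
def zariskiTopology {F A : Type*} [Field F] (R : Subalgebra F (A → F)) :
    TopologicalSpace A :=
  TopologicalSpace.generateFrom {U : Set A | ∃ f ∈ R, U = {a : A | f a ≠ 0}}

/-!
The basic open sets of the Zariski topology are the supports of the functions in `R`, and
`support f ∩ support g = support (f * g)`. Hence two nonempty basic open sets meet exactly when
the product of two nonzero elements of `R` is nonzero, i.e. the space is preirreducible iff `R`
has no zero divisors; and `R` is nontrivial iff `A` is nonempty.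
-/

open Function Set TopologicalSpace

theorem irreducibleSpace_iff_preirreducibleSpace_and_nonempty (X : Type*) [TopologicalSpace X] :
    IrreducibleSpace X ↔ PreirreducibleSpace X ∧ Nonempty X :=
  ⟨fun h => ⟨h.toPreirreducibleSpace, h.toNonempty⟩, fun ⟨_, h⟩ => ⟨h⟩⟩

theorem TopologicalSpace.IsTopologicalBasis.preirreducibleSpace_iff {X : Type*}
    [TopologicalSpace X] {B : Set (Set X)} (hB : IsTopologicalBasis B) :
    PreirreducibleSpace X ↔
      ∀ U ∈ B, ∀ V ∈ B, U.Nonempty → V.Nonempty → (U ∩ V).Nonempty := by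
  refine ⟨fun _ U hU V hV => nonempty_preirreducible_inter (hB.isOpen hU) (hB.isOpen hV),
    fun h => .of_forall_nonempty_inter ?_⟩
  rintro u v hu hv ⟨a, hau⟩ ⟨b, hbv⟩
  obtain ⟨U, hUB, haU, hUu⟩ := hB.exists_subset_of_mem_open hau hu
  obtain ⟨V, hVB, hbV, hVv⟩ := hB.exists_subset_of_mem_open hbv hv
  exact (h U hUB V hVB ⟨a, haU⟩ ⟨b, hbV⟩).mono (inter_subset_inter hUu hVv)

theorem zariskiTopology_isTopologicalBasis {F A : Type*} [Field F] (R : Subalgebra F (A → F)) :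
    @IsTopologicalBasis A (zariskiTopology R) (support '' (R : Set (A → F))) := by
  let _ := zariskiTopology R
  refine ⟨?_, ?_, ?_⟩
  · rintro _ ⟨f, hf, rfl⟩ _ ⟨g, hg, rfl⟩ a ha
    exact ⟨support (f * g), mem_image_of_mem _ (mul_mem hf hg), by rwa [support_mul'],
      (support_mul' f g).subset⟩
  · exact sUnion_eq_univ_iff.2 fun a => ⟨support 1, mem_image_of_mem _ (one_mem R), by simp⟩
  · refine congrArg generateFrom (ext fun U => ?_)
    exact ⟨fun ⟨f, hf, hU⟩ => ⟨f, hf, hU ▸ rfl⟩, fun ⟨f, hf, hU⟩ => ⟨f, hf, hU ▸ rfl⟩⟩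

namespace SubsemiringClass

variable {A K S : Type*} [Semiring K] [SetLike S (A → K)] [SubsemiringClass S (A → K)] (R : S)

theorem noZeroDivisors_iff_support_inter_nonempty [NoZeroDivisors K] :
    NoZeroDivisors R ↔ ∀ U ∈ support '' (R : Set (A → K)), ∀ V ∈ support '' (R : Set (A → K)),
      U.Nonempty → V.Nonempty → (U ∩ V).Nonempty := by
  simp only [forall_mem_image, SetLike.mem_coe, ← support_mul', support_nonempty_iff,
    noZeroDivisors_iff, Subtype.forall, Subtype.ext_iff, MulMemClass.coe_mul,
    ZeroMemClass.coe_zero]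
  exact forall₄_congr fun f _ g _ => by tauto

theorem nontrivial_iff_nonempty [Nontrivial K] : Nontrivial R ↔ Nonempty A := by
  refine ⟨fun _ => ?_, fun _ => SubsemiringClass.nontrivial R⟩
  by_contra hA
  have : IsEmpty A := not_nonempty_iff.mp hA
  exact not_subsingleton R inferInstance

end SubsemiringClass

theorem irreducibleSpace_iff_isDomain_general
    {F A : Type*} [Field F] (R : Subalgebra F (A → F)) :
    @IrreducibleSpace A (zariskiTopology R) ↔ IsDomain R := by
  let _ := zariskiTopology R
  rw [irreducibleSpace_iff_preirreducibleSpace_and_nonempty,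
    (zariskiTopology_isTopologicalBasis R).preirreducibleSpace_iff,
    isDomain_iff_noZeroDivisors_and_nontrivial,
    SubsemiringClass.noZeroDivisors_iff_support_inter_nonempty,
    SubsemiringClass.nontrivial_iff_nonempty]

/-- A nonempty set `A` with coordinate ring `R ⊆ (A → F)`, equipped with the
Zariski topology of `R`, is an irreducible topological space if and only if `R`
is an integral domain. -/
theorem irreducibleSpace_iff_isDomain
    {F A : Type*} [Field F] [Nonempty A] (R : Subalgebra F (A → F)) :
    @IrreducibleSpace A (zariskiTopology R) ↔ IsDomain R :=
  irreducibleSpace_iff_isDomain_general R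
end

section
/- Let F be a field, let A and B be nonempty sets, and let R_A be a subalgebra of the F-algebra of all functions A → F and R_B a subalgebra of the F-algebra of all functions B → F. Equip A with the Zariski topology of R_A, equip B with the Zariski topology of R_B, and equip A × B with the Zariski topology of the subalgebra R of functions A × B → F generated by the functions (a, b) ↦ f(a)·g(b) with f ∈ R_A and g ∈ R_B. If A and B are irreducible topological spaces, then A × B is an irreducible topological space. -/
/-!
For every `b`, the slice `a ↦ h (a, b)` of a function `h` of the product coordinate ring lies in
`R_A`, since this holds for the generators `f(a) g(b)` and is preserved by the algebra operations;
symmetrically in the other variable. So the horizontal and vertical embeddings `A → A × B`,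
`B → A × B` are continuous, and for such a topology on `A × B` irreducibility of the factors
suffices: two nonempty open sets first meet a common horizontal slice, then meet each other inside
it.
-/

open Topology

section SeparatelyContinuous

variable {X Y : Type*} [TopologicalSpace X] [TopologicalSpace Y] {t : TopologicalSpace (X × Y)}

theorem preirreducibleSpace_of_continuous_prodMk [PreirreducibleSpace X] [PreirreducibleSpace Y]
    (hleft : ∀ y, Continuous[_, t] fun x => (x, y)) (hright : ∀ x, Continuous[_, t] (Prod.mk x)) :
    @PreirreducibleSpace (X × Y) t := by
  refine @PreirreducibleSpace.mk _ t ?_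
  rintro U V hU hV ⟨⟨x₁, y₁⟩, -, hU₁⟩ ⟨⟨x₂, y₂⟩, -, hV₂⟩
  obtain ⟨x, -, hxU, hxV⟩ := PreirreducibleSpace.isPreirreducible_univ (X := X) _ _
    ((hleft y₁).isOpen_preimage U hU) ((hleft y₂).isOpen_preimage V hV)
    ⟨x₁, trivial, hU₁⟩ ⟨x₂, trivial, hV₂⟩
  obtain ⟨y, -, hyU, hyV⟩ := PreirreducibleSpace.isPreirreducible_univ (X := Y) _ _
    ((hright x).isOpen_preimage U hU) ((hright x).isOpen_preimage V hV)
    ⟨y₁, trivial, hxU⟩ ⟨y₂, trivial, hxV⟩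
  exact ⟨(x, y), trivial, hyU, hyV⟩

theorem irreducibleSpace_of_continuous_prodMk [IrreducibleSpace X] [IrreducibleSpace Y]
    (hleft : ∀ y, Continuous[_, t] fun x => (x, y)) (hright : ∀ x, Continuous[_, t] (Prod.mk x)) :
    @IrreducibleSpace (X × Y) t :=
  @IrreducibleSpace.mk _ t (preirreducibleSpace_of_continuous_prodMk hleft hright) inferInstance

end SeparatelyContinuous

section FunctionAlgebra

variable {F X Y : Type*}

variable (F) in
def precompAlgHom [CommSemiring F] (φ : X → Y) : (Y → F) →ₐ[F] (X → F) :=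
  AlgHom.pi fun x => Pi.evalAlgHom F (fun _ => F) (φ x)

theorem comp_mem_of_mem_adjoin [CommSemiring F] {R : Subalgebra F (X → F)} {s : Set (Y → F)} (φ : X → Y)
    (hs : ∀ h ∈ s, h ∘ φ ∈ R) {h : Y → F} (hh : h ∈ Algebra.adjoin F s) : h ∘ φ ∈ R :=
  Algebra.adjoin_le (S := R.comap (precompAlgHom F φ)) hs hh

theorem continuous_zariskiTopology [Field F] {R : Subalgebra F (X → F)} {S : Subalgebra F (Y → F)}
    {φ : X → Y} (hφ : ∀ f ∈ S, f ∘ φ ∈ R) :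
    Continuous[zariskiTopology R, zariskiTopology S] φ := by
  refine continuous_generateFrom_iff.mpr ?_
  rintro _ ⟨f, hf, rfl⟩
  exact TopologicalSpace.GenerateOpen.basic _ ⟨f ∘ φ, hφ f hf, rfl⟩

end FunctionAlgebra

theorem prod_irreducibleSpace_of_irreducibleSpace_general
    {F A B : Type*} [Field F]
    (RA : Subalgebra F (A → F)) (RB : Subalgebra F (B → F))
    (hA : @IrreducibleSpace A (zariskiTopology RA))
    (hB : @IrreducibleSpace B (zariskiTopology RB)) :
    @IrreducibleSpace (A × B)
      (zariskiTopology (Algebra.adjoin F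
        {h : A × B → F | ∃ f ∈ RA, ∃ g ∈ RB, h = fun p => f p.1 * g p.2})) := by
  let := zariskiTopology RA
  let := zariskiTopology RB
  refine irreducibleSpace_of_continuous_prodMk (fun b => ?_) (fun a => ?_) <;>
    refine continuous_zariskiTopology fun h hh => comp_mem_of_mem_adjoin _ ?_ hh <;>
    rintro _ ⟨f, hf, g, hg, rfl⟩
  · have hslice : (fun p : A × B => f p.1 * g p.2) ∘ (·, b) = g b • f := by
      ext a; simp [mul_comm]
    exact hslice ▸ RA.smul_mem hf (g b)
  · have hslice : (fun p : A × B => f p.1 * g p.2) ∘ Prod.mk a = f a • g := by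
      ext b; simp
    exact hslice ▸ RB.smul_mem hg (f a)

/-- If `(A, R_A)` and `(B, R_B)` are irreducible sets with coordinate rings, then
`A × B`, equipped with the Zariski topology of the subalgebra of functions
`A × B → F` generated by the products `(a, b) ↦ f a * g b` with `f ∈ R_A`,
`g ∈ R_B` (the tensor product coordinate ring), is irreducible. -/
theorem prod_irreducibleSpace_of_irreducibleSpace
    {F A B : Type*} [Field F] [Nonempty A] [Nonempty B]
    (RA : Subalgebra F (A → F)) (RB : Subalgebra F (B → F))
    (hA : @IrreducibleSpace A (zariskiTopology RA))
    (hB : @IrreducibleSpace B (zariskiTopology RB)) :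
    @IrreducibleSpace (A × B)
      (zariskiTopology (Algebra.adjoin F
        {h : A × B → F | ∃ f ∈ RA, ∃ g ∈ RB, h = fun p => f p.1 * g p.2})) :=
  prod_irreducibleSpace_of_irreducibleSpace_general RA RB hA hB
end
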